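/- Let n ≥ 1 and let (X₁,Y₁) and (X₂,Y₂) be pairs of 2n×2n real matrices with Y₁ and Y₂ symmetric, each satisfying the complete-positivity condition: Y_j − (i/2)Ω_n + (i/2)·X_j·Ω_n·X_jᵀ is PSD for j = 1,2. Then their composition (X₂·X₁, X₂·Y₁·X₂ᵀ + Y₂) also satisfies the complete-positivity condition: (X₂·Y₁·X₂ᵀ + Y₂) − (i/2)Ω_n + (i/2)·(X₂·X₁)·Ω_n·(X₂·X₁)ᵀ is PSD. -/

import Mathlib

open Matrix ComplexOrder

/-- The `2n × 2n` symplectic form matrix `Ω_n`, block diagonal with `n` copies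
of `[[0,1],[-1,0]]`. -/
def Omega (n : ℕ) : Matrix (Fin (2*n)) (Fin (2*n)) ℝ :=
  Matrix.of fun i j =>
    if (i : ℕ) + 1 = (j : ℕ) ∧ (i : ℕ) % 2 = 0 then 1
    else if (j : ℕ) + 1 = (i : ℕ) ∧ (j : ℕ) % 2 = 0 then -1 else 0

/-- Entrywise coercion of a real matrix to a complex matrix. -/
def cC {m : Type*} (M : Matrix m m ℝ) : Matrix m m ℂ := M.map (fun x => (x : ℂ))

/-
The CP matrix of the composition is `X₂ M₁ X₂ᵀ + M₂`, where `M_j` is the CP matrix of `(X_j, Y_j)`: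
the two `Ω`-terms `X₂ Ω X₂ᵀ` introduced by the conjugation cancel. Both summands are PSD.
-/

section CompletePositivity

variable {m : Type*}

lemma cC_mul [Fintype m] (M N : Matrix m m ℝ) : cC (M * N) = cC M * cC N :=
  Matrix.map_mul (f := Complex.ofRealHom)

lemma cC_add (M N : Matrix m m ℝ) : cC (M + N) = cC M + cC N :=
  Matrix.map_add _ (fun _ _ => Complex.ofReal_add _ _) M N

lemma conjTranspose_cC (M : Matrix m m ℝ) : (cC M)ᴴ = cC Mᵀ := by
  ext i j
  simp [cC, conjTranspose_apply]

/-- Its positive semidefiniteness is the complete-positivity condition for the Gaussian map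
`(X, Y)` with respect to the form `Ω`. -/
noncomputable def cpMatrix [Fintype m] (Ω X Y : Matrix m m ℝ) : Matrix m m ℂ :=
  cC Y - (Complex.I / 2) • cC Ω + (Complex.I / 2) • cC (X * Ω * Xᵀ)

lemma cpMatrix_comp [Fintype m] (Ω X₁ Y₁ X₂ Y₂ : Matrix m m ℝ) :
    cpMatrix Ω (X₂ * X₁) (X₂ * Y₁ * X₂ᵀ + Y₂)
      = cC X₂ * cpMatrix Ω X₁ Y₁ * (cC X₂)ᴴ + cpMatrix Ω X₂ Y₂ := by
  simp only [cpMatrix, conjTranspose_cC, cC_add, cC_mul, transpose_mul, Matrix.mul_add,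
    Matrix.add_mul, Matrix.mul_sub, Matrix.sub_mul, Matrix.mul_smul, Matrix.smul_mul,
    Matrix.mul_assoc]
  abel

lemma posSemidef_cpMatrix_comp [Fintype m] {Ω X₁ Y₁ X₂ Y₂ : Matrix m m ℝ}
    (h₁ : (cpMatrix Ω X₁ Y₁).PosSemidef) (h₂ : (cpMatrix Ω X₂ Y₂).PosSemidef) :
    (cpMatrix Ω (X₂ * X₁) (X₂ * Y₁ * X₂ᵀ + Y₂)).PosSemidef := by
  rw [cpMatrix_comp]
  exact (h₁.mul_mul_conjTranspose_same (cC X₂)).add h₂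

end CompletePositivity

theorem cp_comp_general (n : ℕ)
    (X₁ Y₁ X₂ Y₂ : Matrix (Fin (2*n)) (Fin (2*n)) ℝ)
    (h₁ : (cC Y₁ - (Complex.I / 2) • cC (Omega n)
      + (Complex.I / 2) • cC (X₁ * Omega n * X₁ᵀ)).PosSemidef)
    (h₂ : (cC Y₂ - (Complex.I / 2) • cC (Omega n)
      + (Complex.I / 2) • cC (X₂ * Omega n * X₂ᵀ)).PosSemidef) :
    (cC (X₂ * Y₁ * X₂ᵀ + Y₂) - (Complex.I / 2) • cC (Omega n)
      + (Complex.I / 2) • cC ((X₂ * X₁) * Omega n * (X₂ * X₁)ᵀ)).PosSemidef :=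
  posSemidef_cpMatrix_comp (Ω := Omega n) h₁ h₂

/-- The composition of two completely positive Gaussian maps is completely
positive: if `(X₁,Y₁)` and `(X₂,Y₂)` both satisfy the CP condition, so does
`(X₂X₁, X₂Y₁X₂ᵀ + Y₂)`. -/
theorem cp_comp (n : ℕ) (hn : 1 ≤ n)
    (X₁ Y₁ X₂ Y₂ : Matrix (Fin (2*n)) (Fin (2*n)) ℝ)
    (hY₁ : Y₁.IsSymm) (hY₂ : Y₂.IsSymm)
    (h₁ : (cC Y₁ - (Complex.I / 2) • cC (Omega n)
      + (Complex.I / 2) • cC (X₁ * Omega n * X₁ᵀ)).PosSemidef)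
    (h₂ : (cC Y₂ - (Complex.I / 2) • cC (Omega n)
      + (Complex.I / 2) • cC (X₂ * Omega n * X₂ᵀ)).PosSemidef) :
    (cC (X₂ * Y₁ * X₂ᵀ + Y₂) - (Complex.I / 2) • cC (Omega n)
      + (Complex.I / 2) • cC ((X₂ * X₁) * Omega n * (X₂ * X₁)ᵀ)).PosSemidef :=
  cp_comp_general n X₁ Y₁ X₂ Y₂ h₁ h₂
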